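/- arXiv:1512.06012 — 2 statements merged into one kernel-verified Lean document; each statement's English description precedes it below -/
import Mathlib

section
/- For every natural number k ≥ 1 and every real T ≥ 1, the sum over integers n with |n| < T of (T² - n²)^(k/2) equals 2 T^(k+1) ∫_0^1 (1-t²)^(k/2) dt + O_k(T^(k/2)), where the implied constant depends only on k. -/
/-!
Let `D g x = g x - ∫_{x-1/2}^{x+1/2} g`. The unit windows around the integers tile the line, so
for continuous compactly supported `g` we get `∑ₙ g n = ∫ g + ∑ₙ D g n`; as also `∫ D g = 0`,
iterating gives `∑ₙ f n - ∫ f = ∑ₙ Dᵐ f n` for `f x = max (T² - x²) 0 ^ κ`, `κ = k / 2`, and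
every `m ≥ 1`. Since `D` annihilates affine functions and commutes with `d/dx`, `|Dᵐ f x|` is
at most the supremum of `|f⁽²ᵐ⁾|` on the window of radius `m / 2` around `x`, and
`f⁽²ᵐ⁾ y = O(T^κ (T - |y|)^(κ - 2m))` on `(-T, T)`. With `2m ≥ κ + 2` this gives
`Dᵐ f n = O(T^κ / (T - |n|)²)` away from `±T`, while the trivial bound `|Dᵐ f| ≤ 2ᵐ sup |f|`
gives `O(T^κ)` for the `O(m)` integers near `±T`. Summing, the error is `O(T^κ)`.
-/

open Real intervalIntegral MeasureTheory Metric

noncomputable def boxMean (g : ℝ → ℝ) (x : ℝ) : ℝ := ∫ u in x - 1 / 2..x + 1 / 2, g u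

noncomputable def boxDefect (g : ℝ → ℝ) (x : ℝ) : ℝ := g x - boxMean g x

lemma boxMean_eq_convolution (g : ℝ → ℝ) :
    boxMean g = convolution ((Set.Icc (-1 / 2 : ℝ) (1 / 2)).indicator 1) g
      (ContinuousLinearMap.lsmul ℝ ℝ) := by
  ext x
  have : (fun t => (Set.Icc (-1 / 2 : ℝ) (1 / 2)).indicator (1 : ℝ → ℝ) t • g (x - t)) =
      (Set.Icc (-1 / 2 : ℝ) (1 / 2)).indicator (fun t => g (x - t)) := by
    ext t; simp only [Set.indicator_apply]; split_ifs <;> simp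
  rw [convolution_def, boxMean]
  simp only [ContinuousLinearMap.lsmul_apply, this]
  rw [MeasureTheory.integral_indicator measurableSet_Icc, integral_Icc_eq_integral_Ioc,
    ← integral_of_le (by norm_num), integral_comp_sub_left]
  ring_nf

lemma integral_boxDefect {g : ℝ → ℝ} (hg : Integrable g) : ∫ x, boxDefect g x = 0 := by
  have hk : Integrable ((Set.Icc (-1 / 2 : ℝ) (1 / 2)).indicator (1 : ℝ → ℝ)) :=
    (integrable_indicator_iff measurableSet_Icc).2 (integrableOn_const (by simp))
  simp only [boxDefect, boxMean_eq_convolution]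
  rw [integral_sub hg (hk.integrable_convolution _ hg), integral_convolution _ hk hg]
  simp [MeasureTheory.integral_indicator measurableSet_Icc]
  norm_num

lemma hasSum_boxMean_intCast {g : ℝ → ℝ} (hg : Integrable g) :
    HasSum (fun n : ℤ => boxMean g n) (∫ x, g x) := by
  have h : (fun n : ℤ => boxMean g n) = fun n : ℤ => ∫ x in -1 / 2 + n..-1 / 2 + n + 1, g x := by
    ext n; rw [boxMean]; ring_nf
  rw [h]
  exact hg.hasSum_intervalIntegral (-1 / 2)

lemma continuous_boxMean {g : ℝ → ℝ} (hg : Continuous g) : Continuous (boxMean g) := by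
  have hG := continuous_primitive (fun a b => hg.intervalIntegrable (μ := volume) a b) 0
  have h : boxMean g = fun x => (∫ u in 0..x + 1 / 2, g u) - ∫ u in 0..x - 1 / 2, g u :=
    funext fun x =>
      (integral_interval_sub_left (hg.intervalIntegrable _ _) (hg.intervalIntegrable _ _)).symm
  rw [h]
  fun_prop

lemma continuous_boxDefect {g : ℝ → ℝ} (hg : Continuous g) : Continuous (boxDefect g) :=
  hg.sub (continuous_boxMean hg)

lemma continuous_boxDefect_iterate {g : ℝ → ℝ} (hg : Continuous g) (j : ℕ) :
    Continuous (boxDefect^[j] g) := by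
  induction j with
  | zero => exact hg
  | succ j ih => rw [Function.iterate_succ_apply']; exact continuous_boxDefect ih

lemma boxDefect_eq_zero_of_le_abs {g : ℝ → ℝ} {R x : ℝ} (hg : ∀ y, R ≤ |y| → g y = 0)
    (hx : R + 1 / 2 ≤ |x|) : boxDefect g x = 0 := by
  have hwin : ∀ y ∈ Set.uIcc (x - 1 / 2) (x + 1 / 2), g y = 0 := fun y hy => by
    rw [Set.uIcc_of_le (by linarith)] at hy
    exact hg y (by cases abs_cases x <;> cases abs_cases y <;> linarith [hy.1, hy.2])
  rw [boxDefect, boxMean, integral_congr hwin, hg x (by linarith)]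
  simp

lemma boxDefect_iterate_eq_zero_of_le_abs {g : ℝ → ℝ} {R : ℝ} (hg : ∀ y, R ≤ |y| → g y = 0)
    (j : ℕ) {x : ℝ} (hx : R + j / 2 ≤ |x|) : boxDefect^[j] g x = 0 := by
  induction j generalizing x with
  | zero => exact hg x (by simpa using hx)
  | succ j ih =>
    rw [Function.iterate_succ_apply']
    exact boxDefect_eq_zero_of_le_abs (fun y hy => ih hy) (by push_cast at hx; linarith)

lemma integrable_of_eq_zero_of_le_abs {g : ℝ → ℝ} (hg : Continuous g) {R : ℝ}
    (hR : ∀ y, R ≤ |y| → g y = 0) : Integrable g :=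
  hg.integrable_of_hasCompactSupport <| HasCompactSupport.intro (isCompact_closedBall 0 R)
    fun y hy => hR y (by rw [mem_closedBall, dist_zero_right, not_le] at hy; exact hy.le)

lemma summable_intCast_of_eq_zero_of_le_abs {g : ℝ → ℝ} {R : ℝ} (hR : ∀ y, R ≤ |y| → g y = 0) :
    Summable fun n : ℤ => g n := by
  refine summable_of_ne_finset_zero (s := Finset.Icc (-⌈R⌉) ⌈R⌉) fun n hn => hR n ?_
  rw [Finset.mem_Icc, not_and_or, not_le, not_le] at hn
  have : ⌈R⌉ ≤ |n| := by cases hn <;> cases abs_cases n <;> omega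
  calc R ≤ ⌈R⌉ := Int.le_ceil R
    _ ≤ |(n : ℝ)| := by exact_mod_cast this

lemma tsum_boxDefect_intCast {g : ℝ → ℝ} (hg : Continuous g) {R : ℝ}
    (hR : ∀ y, R ≤ |y| → g y = 0) :
    ∑' n : ℤ, boxDefect g n = ∑' n : ℤ, g n - ∫ x, g x := by
  have hmean := hasSum_boxMean_intCast (integrable_of_eq_zero_of_le_abs hg hR)
  rw [← hmean.tsum_eq, ← (summable_intCast_of_eq_zero_of_le_abs hR).tsum_sub hmean.summable]
  rfl

lemma tsum_boxDefect_iterate_intCast {g : ℝ → ℝ} (hg : Continuous g) {R : ℝ}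
    (hR : ∀ y, R ≤ |y| → g y = 0) (m : ℕ) :
    ∑' n : ℤ, boxDefect^[m + 1] g n = ∑' n : ℤ, g n - ∫ x, g x := by
  induction m with
  | zero => exact tsum_boxDefect_intCast hg hR
  | succ m ih =>
    rw [Function.iterate_succ_apply', tsum_boxDefect_intCast (continuous_boxDefect_iterate hg _)
      fun y => boxDefect_iterate_eq_zero_of_le_abs hR (m + 1), ih, Function.iterate_succ_apply',
      integral_boxDefect (integrable_of_eq_zero_of_le_abs (continuous_boxDefect_iterate hg m)
        fun y => boxDefect_iterate_eq_zero_of_le_abs hR m), sub_zero]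

lemma abs_boxMean_le {g : ℝ → ℝ} {c B : ℝ} (hB : ∀ y ∈ closedBall c (1 / 2), |g y| ≤ B) :
    |boxMean g c| ≤ B := by
  have hwin : Set.uIoc (c - 1 / 2) (c + 1 / 2) ⊆ closedBall c (1 / 2) := by
    rw [Set.uIoc_of_le (by linarith), Real.closedBall_eq_Icc]
    exact Set.Ioc_subset_Icc_self
  have := norm_integral_le_of_norm_le_const (a := c - 1 / 2) (b := c + 1 / 2) (f := g)
    fun y hy => hB y (hwin hy)
  rw [boxMean, ← Real.norm_eq_abs]
  convert this using 1
  norm_num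

lemma abs_boxDefect_le {g : ℝ → ℝ} {c B : ℝ} (hB : ∀ y ∈ closedBall c (1 / 2), |g y| ≤ B) :
    |boxDefect g c| ≤ 2 * B :=
  calc |boxDefect g c| ≤ |g c| + |boxMean g c| := abs_sub _ _
    _ ≤ 2 * B := by linarith [hB c (mem_closedBall_self (by norm_num)), abs_boxMean_le hB]

lemma abs_boxDefect_iterate_le {g : ℝ → ℝ} {x B : ℝ} (j : ℕ)
    (hB : ∀ y ∈ closedBall x (j / 2), |g y| ≤ B) : |boxDefect^[j] g x| ≤ 2 ^ j * B := by
  induction j generalizing g B with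
  | zero => simpa using hB x (mem_closedBall_self (by simp))
  | succ j ih =>
    rw [Function.iterate_succ_apply, pow_succ, mul_assoc]
    refine ih fun y hy => abs_boxDefect_le fun z hz => hB z ?_
    refine closedBall_subset_closedBall' ?_ hz
    rw [mem_closedBall] at hy
    push_cast; linarith

lemma boxDefect_iterate_congr {g h : ℝ → ℝ} {x : ℝ} (j : ℕ)
    (hgh : ∀ y ∈ closedBall x (j / 2), g y = h y) : boxDefect^[j] g x = boxDefect^[j] h x := by
  induction j generalizing g h with
  | zero => simpa using hgh x (mem_closedBall_self (by simp))
  | succ j ih =>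
    rw [Function.iterate_succ_apply, Function.iterate_succ_apply]
    refine ih fun y hy => ?_
    have hsub : closedBall y (1 / 2) ⊆ closedBall x ((j + 1 : ℕ) / 2) :=
      closedBall_subset_closedBall' (by rw [mem_closedBall] at hy; push_cast; linarith)
    have hwin : Set.uIcc (y - 1 / 2) (y + 1 / 2) ⊆ closedBall y (1 / 2) := by
      rw [Set.uIcc_of_le (by linarith), Real.closedBall_eq_Icc]
    rw [boxDefect, boxDefect, boxMean, boxMean, hgh y (hsub (mem_closedBall_self (by norm_num))),
      integral_congr fun z hz => hgh z (hsub (hwin hz))]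

lemma abs_boxDefect_le_of_hasDerivAt {g g' g'' : ℝ → ℝ} {c M : ℝ}
    (hg : ∀ x ∈ closedBall c (1 / 2), HasDerivAt g (g' x) x)
    (hg' : ∀ x ∈ closedBall c (1 / 2), HasDerivAt g' (g'' x) x)
    (hM : ∀ x ∈ closedBall c (1 / 2), |g'' x| ≤ M) :
    |boxDefect g c| ≤ M / 4 := by
  set W := closedBall c (1 / 2)
  have hc : c ∈ W := mem_closedBall_self (by norm_num)
  have hW : ∀ u ∈ W, |u - c| ≤ 1 / 2 := fun u hu => by rw [← Real.dist_eq]; exact hu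
  have hM0 : 0 ≤ M := (abs_nonneg _).trans (hM c hc)
  have hg'_lip : ∀ u ∈ W, |g' u - g' c| ≤ M * |u - c| := fun u hu => by
    simpa using (convex_closedBall _ _).norm_image_sub_le_of_norm_hasDerivWithin_le
      (fun x hx => (hg' x hx).hasDerivWithinAt) hM hc hu
  set h : ℝ → ℝ := fun u => g u - g c - g' c * (u - c)
  have hh : ∀ u ∈ W, |h u| ≤ M / 4 := fun u hu => by
    have hderiv : ∀ x ∈ W, HasDerivWithinAt h (g' x - g' c) W x := fun x hx =>
      (((hg x hx).sub_const _).sub (((hasDerivAt_id x).sub_const c).const_mul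
        (g' c))).hasDerivWithinAt.congr_deriv (by simp)
    have hderiv_le : ∀ x ∈ W, ‖g' x - g' c‖ ≤ M * (1 / 2) := fun x hx =>
      (hg'_lip x hx).trans (mul_le_mul_of_nonneg_left (hW x hx) hM0)
    have := (convex_closedBall _ _).norm_image_sub_le_of_norm_hasDerivWithin_le hderiv
      hderiv_le hc hu
    simp only [h, sub_self, mul_zero, sub_zero, Real.norm_eq_abs] at this
    nlinarith [abs_nonneg (u - c), hW u hu]
  have hint : IntervalIntegrable g volume (c - 1 / 2) (c + 1 / 2) :=
    ContinuousOn.intervalIntegrable fun x hx => (hg x <| by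
      rwa [Set.uIcc_of_le (by linarith), ← Real.closedBall_eq_Icc] at hx
      ).continuousAt.continuousWithinAt
  -- `boxMean` reproduces affine functions, so only the Taylor remainder `h` survives.
  have hD : boxDefect g c = -boxMean h c := by
    simp only [h, boxMean]
    rw [integral_sub (hint.sub intervalIntegrable_const)
        (Continuous.intervalIntegrable (by fun_prop) _ _),
      integral_sub hint intervalIntegrable_const, intervalIntegral.integral_const_mul,
      integral_comp_sub_right fun u => u]
    simp [boxDefect, boxMean, integral_id]
    ring
  rw [hD, abs_neg]
  exact abs_boxMean_le hh

lemma hasDerivAt_boxMean {g : ℝ → ℝ} {c : ℝ} (hg : ContinuousOn g (closedBall c 1)) :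
    HasDerivAt (boxMean g) (g (c + 1 / 2) - g (c - 1 / 2)) c := by
  rw [Real.closedBall_eq_Icc] at hg
  set G : ℝ → ℝ := fun y => ∫ u in c..y, g u
  have hint : ∀ y ∈ Set.Icc (c - 1) (c + 1), IntervalIntegrable g volume c y := fun y hy =>
    (hg.mono (Set.uIcc_subset_Icc ⟨by linarith, by linarith⟩ hy)).intervalIntegrable
  have hG : ∀ z ∈ Set.Ioo (c - 1) (c + 1), HasDerivAt G (g z) z := fun z hz =>
    integral_hasDerivAt_right (hint z (Set.Ioo_subset_Icc_self hz))
      ((hg.mono Set.Ioo_subset_Icc_self).stronglyMeasurableAtFilter isOpen_Ioo z hz)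
      (hg.continuousAt (Icc_mem_nhds hz.1 hz.2))
  have hloc : ∀ᶠ y in nhds c, G (y + 1 / 2) - G (y - 1 / 2) = boxMean g y := by
    filter_upwards [Ioo_mem_nhds (show c - 1 / 2 < c by linarith) (show c < c + 1 / 2 by linarith)]
      with y hy
    exact integral_interval_sub_left (hint _ ⟨by linarith [hy.1], by linarith [hy.2]⟩)
      (hint _ ⟨by linarith [hy.1], by linarith [hy.2]⟩)
  refine HasDerivAt.congr_of_eventuallyEq ?_ (hloc.mono fun y hy => hy.symm)
  have h₁ := (hG (c + 1 / 2) ⟨by linarith, by linarith⟩).comp_add_const c (1 / 2)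
  have h₂ := (hG (c - 1 / 2) ⟨by linarith, by linarith⟩).comp_sub_const c (1 / 2)
  exact h₁.sub h₂

lemma hasDerivAt_boxDefect {g g' : ℝ → ℝ} {c : ℝ}
    (hg : ∀ x ∈ closedBall c 1, HasDerivAt g (g' x) x) (hg' : ContinuousOn g' (closedBall c 1)) :
    HasDerivAt (boxDefect g) (boxDefect g' c) c := by
  have hc : c ∈ closedBall c 1 := mem_closedBall_self zero_le_one
  have hwin : Set.uIcc (c - 1 / 2) (c + 1 / 2) ⊆ closedBall c 1 := by
    rw [Set.uIcc_of_le (by linarith), Real.closedBall_eq_Icc]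
    exact Set.Icc_subset_Icc (by linarith) (by linarith)
  have hftc : boxMean g' c = g (c + 1 / 2) - g (c - 1 / 2) :=
    integral_eq_sub_of_hasDerivAt (fun x hx => hg x (hwin hx)) ((hg'.mono hwin).intervalIntegrable)
  rw [boxDefect, hftc]
  exact (hg c hc).sub (hasDerivAt_boxMean fun x hx => (hg x hx).continuousAt.continuousWithinAt)

lemma abs_boxDefect_iterate_le_of_hasDerivAt (φ : ℕ → ℝ → ℝ) {x r M : ℝ} (j : ℕ)
    (hφ : ∀ i, ∀ y ∈ ball x r, HasDerivAt (φ i) (φ (i + 1) y) y) (hj : j < r)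
    (hM : ∀ y ∈ closedBall x (j / 2), |φ (2 * j) y| ≤ M) :
    |boxDefect^[j] (φ 0) x| ≤ M / 4 ^ j := by
  induction j generalizing φ r M with
  | zero => simpa using hM x (mem_closedBall_self (by simp))
  | succ j ih =>
    push_cast at hj
    rw [Function.iterate_succ_apply, pow_succ', ← div_div]
    -- `boxDefect` commutes with `d/dx`, so `boxDefect ∘ φ` is again a chain of derivatives.
    refine ih (fun i => boxDefect (φ i)) (r := r - 1) (fun i y hy => ?_) (by linarith)
      fun y hy => ?_
    · have hsub : closedBall y 1 ⊆ ball x r := closedBall_subset_ball' (by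
        rw [mem_ball] at hy; linarith)
      exact hasDerivAt_boxDefect (fun z hz => hφ i z (hsub hz))
        fun z hz => (hφ (i + 1) z (hsub hz)).continuousAt.continuousWithinAt
    · have hsub : closedBall y (1 / 2) ⊆ closedBall x ((j + 1 : ℕ) / 2) :=
        closedBall_subset_closedBall' (by rw [mem_closedBall] at hy; push_cast; linarith)
      have hball : closedBall x ((j + 1 : ℕ) / 2) ⊆ ball x r :=
        closedBall_subset_ball (by push_cast; linarith)
      exact abs_boxDefect_le_of_hasDerivAt (fun z hz => hφ _ z (hball (hsub hz)))
        (fun z hz => hφ _ z (hball (hsub hz))) fun z hz => by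
          simpa [mul_add, add_assoc] using hM z (hsub hz)

section

open Polynomial

/-- `(d/dt)ⁱ (1 - t²)^κ = derivPoly κ i (t) * (1 - t²)^(κ - i)` on `(-1, 1)`: differentiating
`P(t) (1 - t²)^(κ - i)` gives `((1 - t²) P'(t) - 2 (κ - i) t P(t)) (1 - t²)^(κ - i - 1)`. -/
noncomputable def derivPoly (κ : ℝ) : ℕ → ℝ[X]
  | 0 => 1
  | i + 1 => (1 - X ^ 2) * derivative (derivPoly κ i) - C (2 * (κ - i)) * X * derivPoly κ i

noncomputable def powDeriv (κ : ℝ) (i : ℕ) (t : ℝ) : ℝ :=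
  (derivPoly κ i).eval t * (1 - t ^ 2) ^ (κ - i)

lemma powDeriv_zero (κ t : ℝ) : powDeriv κ 0 t = (1 - t ^ 2) ^ κ := by
  simp [powDeriv, derivPoly]

lemma hasDerivAt_powDeriv (κ : ℝ) (i : ℕ) {t : ℝ} (ht : |t| < 1) :
    HasDerivAt (powDeriv κ i) (powDeriv κ (i + 1) t) t := by
  have hpos : 0 < 1 - t ^ 2 := by nlinarith [abs_lt.1 ht, sq_abs t]
  have hq : HasDerivAt (fun s : ℝ => 1 - s ^ 2) (-(2 * t)) t := by
    simpa using (hasDerivAt_pow 2 t).const_sub 1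
  refine (((derivPoly κ i).hasDerivAt t).mul
    (hq.rpow_const (p := κ - i) (Or.inl hpos.ne'))).congr_deriv ?_
  have hsplit : (1 - t ^ 2) ^ (κ - i) = (1 - t ^ 2) * (1 - t ^ 2) ^ (κ - i - 1) := by
    conv_lhs => rw [show κ - i = 1 + (κ - i - 1) by ring, rpow_add hpos, rpow_one]
  simp only [powDeriv, derivPoly, eval_sub, eval_mul, eval_pow, eval_X, eval_one, eval_C]
  rw [hsplit]
  push_cast
  ring_nf

lemma exists_abs_powDeriv_le (κ : ℝ) (i : ℕ) :
    ∃ C, 0 ≤ C ∧ ∀ t, |t| ≤ 1 → |powDeriv κ i t| ≤ C * (1 - t ^ 2) ^ (κ - i) := by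
  obtain ⟨C, hC⟩ := isCompact_Icc.exists_bound_of_continuousOn
    (derivPoly κ i).continuous.continuousOn (s := Set.Icc (-1 : ℝ) 1)
  refine ⟨max C 0, le_max_right _ _, fun t ht => ?_⟩
  have hnn : 0 ≤ 1 - t ^ 2 := by nlinarith [abs_le.1 ht, sq_abs t]
  rw [powDeriv, abs_mul, abs_of_nonneg (rpow_nonneg hnn _)]
  exact mul_le_mul_of_nonneg_right ((hC t (abs_le.1 ht)).trans (le_max_left _ _))
    (rpow_nonneg hnn _)

end

/-- The `i`-th derivative of `x ↦ (T² - x²)^κ` on `(-T, T)`. -/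
noncomputable def scaledPowDeriv (κ T : ℝ) (i : ℕ) (x : ℝ) : ℝ :=
  T ^ (2 * κ - i) * powDeriv κ i (x / T)

lemma hasDerivAt_scaledPowDeriv (κ : ℝ) (i : ℕ) {T x : ℝ} (hT : 0 < T) (hx : |x| < T) :
    HasDerivAt (scaledPowDeriv κ T i) (scaledPowDeriv κ T (i + 1) x) x := by
  have ht : |x / T| < 1 := by rwa [abs_div, abs_of_pos hT, div_lt_one hT]
  refine (((hasDerivAt_powDeriv κ i ht).comp x ((hasDerivAt_id x).div_const T)).const_mul
    (T ^ (2 * κ - i))).congr_deriv ?_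
  rw [scaledPowDeriv, Nat.cast_succ, ← sub_sub, rpow_sub hT (2 * κ - i) 1, rpow_one]
  field_simp

lemma exists_abs_scaledPowDeriv_le {κ : ℝ} {i : ℕ} (hi : κ ≤ i) :
    ∃ C, 0 ≤ C ∧ ∀ T > 0, ∀ y, |y| < T →
      |scaledPowDeriv κ T i y| ≤ C * T ^ κ * (T - |y|) ^ (κ - i) := by
  obtain ⟨C, hC0, hC⟩ := exists_abs_powDeriv_le κ i
  refine ⟨C, hC0, fun T hT y hy => ?_⟩
  have hd : 0 < T - |y| := by linarith
  have hbase : (T - |y|) / T ≤ 1 - (y / T) ^ 2 := by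
    rw [div_pow, ← sq_abs y, div_le_iff₀ hT]
    field_simp
    nlinarith [abs_nonneg y]
  calc |scaledPowDeriv κ T i y| = T ^ (2 * κ - i) * |powDeriv κ i (y / T)| := by
        rw [scaledPowDeriv, abs_mul, abs_of_pos (rpow_pos_of_pos hT _)]
    _ ≤ T ^ (2 * κ - i) * (C * ((T - |y|) / T) ^ (κ - i)) := by
        gcongr
        refine (hC _ ?_).trans (mul_le_mul_of_nonneg_left
          (rpow_le_rpow_of_nonpos (div_pos hd hT) hbase (by linarith)) hC0)
        rw [abs_div, abs_of_pos hT, div_le_one hT]; exact hy.le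
    _ = C * T ^ κ * (T - |y|) ^ (κ - i) := by
        rw [div_rpow hd.le hT.le, show 2 * κ - i = κ + (κ - i) by ring, rpow_add hT]
        field_simp

noncomputable def truncPow (κ T x : ℝ) : ℝ := max (T ^ 2 - x ^ 2) 0 ^ κ

lemma truncPow_nonneg (κ T x : ℝ) : 0 ≤ truncPow κ T x := rpow_nonneg (le_max_right _ _) _

lemma continuous_truncPow {κ : ℝ} (hκ : 0 ≤ κ) (T : ℝ) : Continuous (truncPow κ T) :=
  Continuous.rpow_const (by fun_prop) fun _ => Or.inr hκ

lemma truncPow_eq_zero {κ T x : ℝ} (hκ : κ ≠ 0) (hT : 0 ≤ T) (hx : T ≤ |x|) :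
    truncPow κ T x = 0 := by
  have : T ^ 2 - x ^ 2 ≤ 0 := by nlinarith [sq_abs x]
  rw [truncPow, max_eq_right this, zero_rpow hκ]

lemma truncPow_of_abs_lt {κ T x : ℝ} (hx : |x| < T) : truncPow κ T x = (T ^ 2 - x ^ 2) ^ κ := by
  rw [truncPow, max_eq_left (by nlinarith [sq_abs x, abs_nonneg x])]

lemma truncPow_le {κ T : ℝ} (hκ : 0 ≤ κ) (hT : 0 ≤ T) (x : ℝ) :
    truncPow κ T x ≤ (2 * T * max (T - |x|) 0) ^ κ := by
  refine rpow_le_rpow (le_max_right _ _) (max_le ?_ (by positivity)) hκ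
  rcases le_total |x| T with h | h
  · rw [max_eq_left (by linarith)]; nlinarith [sq_abs x, abs_nonneg x]
  · nlinarith [sq_abs x, abs_nonneg x, le_max_right (T - |x|) 0]

lemma truncPow_mul {κ T : ℝ} (hT : 0 ≤ T) (t : ℝ) :
    truncPow κ T (T * t) = T ^ (2 * κ) * truncPow κ 1 t := by
  rw [truncPow, truncPow, show T ^ 2 - (T * t) ^ 2 = T ^ 2 * (1 ^ 2 - t ^ 2) by ring,
    ← mul_zero (T ^ 2), ← mul_max_of_nonneg _ _ (sq_nonneg T), mul_zero,
    mul_rpow (sq_nonneg T) (le_max_right _ _), rpow_mul hT, rpow_two]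

lemma integral_truncPow_one {κ : ℝ} (hκ : 0 < κ) :
    ∫ x, truncPow κ 1 x = 2 * ∫ t in (0 : ℝ)..1, (1 - t ^ 2) ^ κ := by
  have heven : (fun x => truncPow κ 1 x) = fun x => truncPow κ 1 |x| := by
    ext x; rw [truncPow, truncPow, sq_abs]
  rw [heven, integral_comp_abs (f := truncPow κ 1), integral_of_le zero_le_one,
    setIntegral_eq_of_subset_of_forall_sdiff_eq_zero measurableSet_Ioi Set.Ioc_subset_Ioi_self
      fun x hx => truncPow_eq_zero hκ.ne' zero_le_one ?_]
  · refine congrArg _ (setIntegral_congr_fun measurableSet_Ioc fun x hx => ?_)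
    rw [truncPow, one_pow, max_eq_left (by nlinarith [hx.1, hx.2])]
  · rw [Set.mem_sdiff, Set.mem_Ioi, Set.mem_Ioc, not_and, not_le] at hx
    exact (hx.2 hx.1).le.trans (le_abs_self x)

lemma integral_truncPow {κ T : ℝ} (hκ : 0 < κ) (hT : 0 < T) :
    ∫ x, truncPow κ T x = 2 * T ^ (2 * κ + 1) * ∫ t in (0 : ℝ)..1, (1 - t ^ 2) ^ κ := by
  have := Measure.integral_comp_mul_left (truncPow κ T) T
  simp only [truncPow_mul hT.le, MeasureTheory.integral_const_mul, integral_truncPow_one hκ,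
    smul_eq_mul, abs_inv, abs_of_pos hT] at this
  rw [eq_inv_mul_iff_mul_eq₀ hT.ne'] at this
  rw [← this, rpow_add hT, rpow_one]
  ring

lemma truncPow_eq_scaledPowDeriv_zero {κ T x : ℝ} (hT : 0 < T) (hx : |x| ≤ T) :
    truncPow κ T x = scaledPowDeriv κ T 0 x := by
  have ht : (x / T) ^ 2 ≤ 1 := by
    rw [div_pow, div_le_one (by positivity), ← sq_abs x]; nlinarith [abs_nonneg x]
  conv_lhs => rw [← mul_div_cancel₀ x hT.ne']
  rw [truncPow_mul hT.le, scaledPowDeriv, powDeriv_zero, truncPow, one_pow,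
    max_eq_left (by linarith), Nat.cast_zero, sub_zero]

lemma abs_boxDefect_iterate_truncPow_le_of_lt {κ C T x : ℝ} {m : ℕ} (hT : 0 < T)
    (hκm : κ ≤ 2 * m) (hC0 : 0 ≤ C)
    (hC : ∀ y, |y| < T → |scaledPowDeriv κ T (2 * m) y| ≤ C * T ^ κ * (T - |y|) ^ (κ - (2 * m : ℕ)))
    (hx : m < T - |x|) :
    |boxDefect^[m] (truncPow κ T) x| ≤ C * T ^ κ * (T - |x| - m / 2) ^ (κ - 2 * m) / 4 ^ m := by
  have hball : ∀ y ∈ closedBall x (T - |x|), |y| ≤ T := fun y hy => by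
    have := abs_sub_abs_le_abs_sub y x
    rw [mem_closedBall, Real.dist_eq] at hy; linarith
  rw [boxDefect_iterate_congr m fun y hy => truncPow_eq_scaledPowDeriv_zero hT (hball y
    (closedBall_subset_closedBall (by linarith) hy))]
  refine abs_boxDefect_iterate_le_of_hasDerivAt (scaledPowDeriv κ T) m (fun i y hy =>
    hasDerivAt_scaledPowDeriv κ i hT ?_) hx fun y hy => (hC y ?_).trans ?_
  · have := abs_sub_abs_le_abs_sub y x
    rw [mem_ball, Real.dist_eq] at hy; linarith
  · have := abs_sub_abs_le_abs_sub y x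
    rw [mem_closedBall, Real.dist_eq] at hy; linarith
  · have := abs_sub_abs_le_abs_sub y x
    rw [mem_closedBall, Real.dist_eq] at hy
    push_cast
    exact mul_le_mul_of_nonneg_left (rpow_le_rpow_of_nonpos (x := T - |x| - m / 2)
      (by linarith) (by linarith) (by linarith)) (by positivity)

lemma abs_boxDefect_iterate_truncPow_le {κ T : ℝ} (hκ : 0 ≤ κ) (hT : 0 ≤ T) (m : ℕ) (x : ℝ) :
    |boxDefect^[m] (truncPow κ T) x| ≤ 2 ^ m * (2 * T * max (T - |x| + m / 2) 0) ^ κ := by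
  refine abs_boxDefect_iterate_le m fun y hy => ?_
  have := abs_sub_abs_le_abs_sub x y
  rw [mem_closedBall, Real.dist_eq, abs_sub_comm] at hy
  rw [abs_of_nonneg (truncPow_nonneg _ _ _)]
  refine (truncPow_le hκ hT y).trans (rpow_le_rpow (by positivity) ?_ hκ)
  gcongr
  linarith

lemma abs_boxDefect_iterate_truncPow_le_of_lt_add_two {κ T x : ℝ} (hκ : 0 < κ) (hT : 0 < T)
    {m : ℕ} (hx : T - |x| < m + 2) :
    |boxDefect^[m] (truncPow κ T) x|
      ≤ 2 ^ m * (3 * m + 4) ^ κ * (1 + (m + 2) ^ 2) * T ^ κ * (1 + (T - |x|) ^ 2)⁻¹ := by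
  refine (abs_boxDefect_iterate_truncPow_le hκ.le hT.le m x).trans ?_
  set d := T - |x|
  rcases le_or_gt (d + m / 2) 0 with hneg | hpos
  · rw [max_eq_right hneg, mul_zero, zero_rpow hκ.ne', mul_zero]
    positivity
  have hd2 : d ^ 2 ≤ (m + 2) ^ 2 := by nlinarith
  calc 2 ^ m * (2 * T * max (d + m / 2) 0) ^ κ ≤ 2 ^ m * ((3 * m + 4) * T) ^ κ := by
        rw [max_eq_left hpos.le]
        exact mul_le_mul_of_nonneg_left (rpow_le_rpow (by positivity) (by nlinarith) hκ.le)
          (by positivity)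
    _ = 2 ^ m * (3 * m + 4) ^ κ * T ^ κ * 1 := by rw [mul_rpow (by positivity) hT.le]; ring
    _ ≤ 2 ^ m * (3 * m + 4) ^ κ * T ^ κ * ((1 + (m + 2) ^ 2) * (1 + d ^ 2)⁻¹) := by
        gcongr
        rw [← div_eq_mul_inv, one_le_div (by positivity)]
        linarith
    _ = 2 ^ m * (3 * m + 4) ^ κ * (1 + (m + 2) ^ 2) * T ^ κ * (1 + d ^ 2)⁻¹ := by ring

lemma exists_abs_boxDefect_iterate_truncPow_le {κ : ℝ} (hκ : 0 < κ) {m : ℕ}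
    (hm : κ + 2 ≤ 2 * m) :
    ∃ C, 0 ≤ C ∧ ∀ T > 0, ∀ x,
      |boxDefect^[m] (truncPow κ T) x| ≤ C * T ^ κ * (1 + (T - |x|) ^ 2)⁻¹ := by
  obtain ⟨C, hC0, hC⟩ :=
    exists_abs_scaledPowDeriv_le (κ := κ) (i := 2 * m) (by push_cast; linarith)
  set E : ℝ := 2 ^ m * (3 * m + 4) ^ κ * (1 + (m + 2) ^ 2)
  refine ⟨8 * C + E, by positivity, fun T hT x => ?_⟩
  set d := T - |x|
  have hw : 0 ≤ T ^ κ * (1 + d ^ 2)⁻¹ := by positivity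
  rcases le_or_gt ((m : ℝ) + 2) d with hd | hd
  · have hdm : 1 ≤ d - m / 2 := by linarith
    have hdecay : (d - m / 2) ^ (κ - 2 * m) ≤ 8 * (1 + d ^ 2)⁻¹ :=
      calc (d - m / 2) ^ (κ - 2 * m) ≤ (d - m / 2) ^ (-2 : ℝ) :=
            rpow_le_rpow_of_exponent_le hdm (by linarith)
        _ = ((d - m / 2) ^ 2)⁻¹ := by rw [rpow_neg (by linarith), rpow_two]
        _ ≤ ((1 + d ^ 2) / 8)⁻¹ := inv_anti₀ (by positivity) (by nlinarith)
        _ = 8 * (1 + d ^ 2)⁻¹ := by rw [inv_div, div_eq_mul_inv]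
    calc |boxDefect^[m] (truncPow κ T) x|
        ≤ C * T ^ κ * (d - m / 2) ^ (κ - 2 * m) / 4 ^ m :=
          abs_boxDefect_iterate_truncPow_le_of_lt hT (by linarith) hC0 (hC T hT) (by linarith)
      _ ≤ C * T ^ κ * (d - m / 2) ^ (κ - 2 * m) :=
          div_le_self (by positivity) (one_le_pow₀ (by norm_num))
      _ ≤ C * T ^ κ * (8 * (1 + d ^ 2)⁻¹) := by gcongr
      _ ≤ (8 * C + E) * T ^ κ * (1 + d ^ 2)⁻¹ := by
          nlinarith [mul_nonneg (by positivity : 0 ≤ E) hw]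
  · refine (abs_boxDefect_iterate_truncPow_le_of_lt_add_two hκ hT hd).trans ?_
    nlinarith [mul_nonneg hC0 hw]

lemma inv_one_add_sq_sub_le (n : ℤ) (x : ℝ) :
    (1 + (n - x) ^ 2)⁻¹ ≤ 3 * (1 + ((n - ⌊x⌋ : ℤ) : ℝ) ^ 2)⁻¹ := by
  have h₁ : 0 ≤ x - ⌊x⌋ := sub_nonneg.2 (Int.floor_le x)
  have h₂ : x - ⌊x⌋ ≤ 1 := by linarith [Int.lt_floor_add_one x]
  rw [← div_eq_mul_inv, le_div_iff₀ (by positivity), ← div_eq_inv_mul,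
    div_le_iff₀ (by positivity)]
  push_cast
  nlinarith [sq_nonneg (n - x - (x - ⌊x⌋)), mul_le_mul h₂ h₂ h₁ zero_le_one]

lemma summable_inv_one_add_sq_intCast : Summable fun n : ℤ => (1 + (n : ℝ) ^ 2)⁻¹ := by
  refine (summable_one_div_int_pow.2 one_lt_two).of_norm_bounded_eventually ?_
  filter_upwards [Filter.eventually_cofinite_ne 0] with n hn
  rw [Real.norm_eq_abs, abs_of_pos (by positivity), one_div]
  have : (n : ℝ) ≠ 0 := Int.cast_ne_zero.2 hn
  exact inv_anti₀ (by positivity) (by linarith)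

lemma summable_inv_one_add_sq_sub (x : ℝ) : Summable fun n : ℤ => (1 + (n - x) ^ 2)⁻¹ :=
  Summable.of_nonneg_of_le (fun _ => by positivity) (fun n => inv_one_add_sq_sub_le n x)
    (((Equiv.subRight ⌊x⌋).summable_iff.2 summable_inv_one_add_sq_intCast).mul_left 3)

lemma tsum_inv_one_add_sq_sub_le (x : ℝ) :
    ∑' n : ℤ, (1 + (n - x) ^ 2)⁻¹ ≤ 3 * ∑' n : ℤ, (1 + (n : ℝ) ^ 2)⁻¹ := by
  have h := (Equiv.subRight ⌊x⌋).summable_iff.2 summable_inv_one_add_sq_intCast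
  calc ∑' n : ℤ, (1 + (n - x) ^ 2)⁻¹ ≤ ∑' n : ℤ, 3 * (1 + ((n - ⌊x⌋ : ℤ) : ℝ) ^ 2)⁻¹ :=
        (summable_inv_one_add_sq_sub x).tsum_le_tsum (fun n => inv_one_add_sq_sub_le n x)
          (h.mul_left 3)
    _ = 3 * ∑' n : ℤ, (1 + (n : ℝ) ^ 2)⁻¹ := by
        rw [tsum_mul_left]
        exact congrArg _ ((Equiv.subRight ⌊x⌋).tsum_eq fun n : ℤ => (1 + (n : ℝ) ^ 2)⁻¹)

lemma inv_one_add_sq_sub_abs_le (T y : ℝ) :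
    (1 + (T - |y|) ^ 2)⁻¹ ≤ (1 + (y - T) ^ 2)⁻¹ + (1 + (y - -T) ^ 2)⁻¹ := by
  have h₁ : 0 ≤ (1 + (y - T) ^ 2)⁻¹ := by positivity
  have h₂ : 0 ≤ (1 + (y - -T) ^ 2)⁻¹ := by positivity
  rcases abs_cases y with ⟨hy, -⟩ | ⟨hy, -⟩ <;> rw [hy]
  · rw [show (T - y) ^ 2 = (y - T) ^ 2 by ring]; linarith
  · rw [show (T - -y) ^ 2 = (y - -T) ^ 2 by ring]; linarith

lemma exists_abs_tsum_truncPow_sub_integral_le {κ : ℝ} (hκ : 0 < κ) :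
    ∃ C, ∀ T > 0, |∑' n : ℤ, truncPow κ T n - ∫ x, truncPow κ T x| ≤ C * T ^ κ := by
  obtain ⟨m, hm⟩ := exists_nat_ge (κ / 2 + 1)
  obtain ⟨C, hC0, hC⟩ :=
    exists_abs_boxDefect_iterate_truncPow_le hκ (m := m + 1) (by push_cast; linarith)
  set S := ∑' n : ℤ, (1 + (n : ℝ) ^ 2)⁻¹
  refine ⟨6 * C * S, fun T hT => ?_⟩
  have hsum := (summable_inv_one_add_sq_sub T).add (summable_inv_one_add_sq_sub (-T))
  rw [← tsum_boxDefect_iterate_intCast (continuous_truncPow hκ.le T)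
    (fun y hy => truncPow_eq_zero hκ.ne' hT.le hy) m]
  calc |∑' n : ℤ, boxDefect^[m + 1] (truncPow κ T) n|
      ≤ ∑' n : ℤ, C * T ^ κ * ((1 + (n - T) ^ 2)⁻¹ + (1 + (n - -T) ^ 2)⁻¹) :=
        tsum_of_norm_bounded (f := fun n : ℤ => boxDefect^[m + 1] (truncPow κ T) n)
          (hsum.mul_left _).hasSum fun n => (hC T hT n).trans <|
            mul_le_mul_of_nonneg_left (inv_one_add_sq_sub_abs_le T n) (by positivity)
    _ = C * T ^ κ * (∑' n : ℤ, (1 + (n - T) ^ 2)⁻¹ + ∑' n : ℤ, (1 + (n - -T) ^ 2)⁻¹) := by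
        rw [tsum_mul_left,
          (summable_inv_one_add_sq_sub T).tsum_add (summable_inv_one_add_sq_sub (-T))]
    _ ≤ C * T ^ κ * (3 * S + 3 * S) := by
        gcongr <;> exact tsum_inv_one_add_sq_sub_le _
    _ = 6 * C * S * T ^ κ := by ring

theorem smoothed_sum_asymptotic :
    ∀ k : ℕ, 1 ≤ k → ∃ C : ℝ, ∀ T : ℝ, 1 ≤ T →
      |(∑' n : ℤ, if |(n:ℝ)| < T then (T^2 - (n:ℝ)^2) ^ ((k:ℝ)/2) else 0)
          - 2 * T ^ ((k:ℝ) + 1) * ∫ t in (0:ℝ)..1, (1 - t^2) ^ ((k:ℝ)/2)|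
        ≤ C * T ^ ((k:ℝ)/2) := by
  intro k hk
  have hκ : 0 < (k : ℝ) / 2 := div_pos (Nat.cast_pos.2 hk) two_pos
  obtain ⟨C, hC⟩ := exists_abs_tsum_truncPow_sub_integral_le hκ
  refine ⟨C, fun T hT => ?_⟩
  have hT0 : 0 < T := by linarith
  have hsum : (fun n : ℤ => if |(n : ℝ)| < T then (T ^ 2 - (n : ℝ) ^ 2) ^ ((k : ℝ) / 2) else 0) =
      fun n : ℤ => truncPow ((k : ℝ) / 2) T n := by
    ext n
    split_ifs with h
    · exact (truncPow_of_abs_lt h).symm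
    · exact (truncPow_eq_zero hκ.ne' hT0.le (not_lt.1 h)).symm
  rw [hsum, show (k : ℝ) + 1 = 2 * ((k : ℝ) / 2) + 1 by ring, ← integral_truncPow hκ hT0]
  exact hC T hT0
end

section
/- For all real T, the sum over integers n with |n| < T of (T² - n²) equals (4/3)T³ - (2{T}² - 2{T} + 1/3)T + ((2/3){T}³ - {T}² + (1/3){T}), where {T} denotes the fractional part of T. -/
/-!
The summand vanishes at `|n| = T`, so the sum runs over `|n| ≤ ⌊T⌋`; with `M = ⌊T⌋ = T - {T}`
it is `(2M + 1) T² - M (M + 1) (2M + 1) / 3`, which expands to the stated polynomial in `T`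
and `{T}`.
-/

open Real Finset

theorem Int.three_mul_sum_Icc_neg_sq {R : Type*} [CommRing R] (M : ℕ) :
    3 * ∑ n ∈ Icc (-(M : ℤ)) M, (n : R) ^ 2 = M * (M + 1) * (2 * M + 1) := by
  induction M with
  | zero => simp
  | succ M ih =>
    have hsplit : Icc (-((M : ℤ) + 1)) (M + 1) =
        insert (-((M : ℤ) + 1)) (insert ((M : ℤ) + 1) (Icc (-(M : ℤ)) M)) := by
      ext n; simp only [mem_Icc, mem_insert]; omega
    have hlow : -((M : ℤ) + 1) ∉ insert ((M : ℤ) + 1) (Icc (-(M : ℤ)) M) := by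
      simp only [mem_insert, mem_Icc]; omega
    have hhigh : (M : ℤ) + 1 ∉ Icc (-(M : ℤ)) M := by
      simp only [mem_Icc]; omega
    push_cast
    rw [hsplit, sum_insert hlow, sum_insert hhigh, mul_add, mul_add, ih]
    push_cast
    ring

theorem Int.card_Icc_neg (M : ℕ) : #(Icc (-(M : ℤ)) M) = 2 * M + 1 := by
  rw [Int.card_Icc]
  omega

theorem Int.mem_Icc_neg_natFloor_iff {T : ℝ} (hT : 0 ≤ T) (n : ℤ) :
    n ∈ Icc (-(⌊T⌋₊ : ℤ)) ⌊T⌋₊ ↔ |(n : ℝ)| ≤ T := by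
  rw [mem_Icc, ← abs_le, ← Int.cast_abs, ← Int.natCast_natAbs, Nat.cast_le, Int.cast_natCast,
    Nat.le_floor_iff hT]

theorem tsum_ite_abs_lt_eq_sum_Icc {T : ℝ} (hT : 0 ≤ T) :
    (∑' n : ℤ, if |(n : ℝ)| < T then T ^ 2 - (n : ℝ) ^ 2 else 0)
      = ∑ n ∈ Icc (-(⌊T⌋₊ : ℤ)) ⌊T⌋₊, (T ^ 2 - (n : ℝ) ^ 2) := by
  rw [tsum_eq_sum (s := Icc (-(⌊T⌋₊ : ℤ)) ⌊T⌋₊)]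
  · refine sum_congr rfl fun n hn => ?_
    rw [Int.mem_Icc_neg_natFloor_iff hT] at hn
    split_ifs with hlt
    · rfl
    · have hsq : (n : ℝ) ^ 2 = T ^ 2 := by
        rw [← sq_abs, le_antisymm hn (not_lt.mp hlt)]
      rw [hsq, sub_self]
  · intro n hn
    rw [Int.mem_Icc_neg_natFloor_iff hT, not_le] at hn
    exact if_neg hn.not_gt

theorem sum_sq_explicit :
    ∀ T : ℝ, 0 ≤ T →
      (∑' n : ℤ, if |(n:ℝ)| < T then T^2 - (n:ℝ)^2 else 0)
        = (4/3) * T^3 - (2 * Int.fract T ^ 2 - 2 * Int.fract T + 1/3) * T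
          + ((2/3) * Int.fract T ^ 3 - Int.fract T ^ 2 + (1/3) * Int.fract T) := by
  intro T hT
  have hM : (⌊T⌋₊ : ℝ) = T - Int.fract T := by
    rw [natCast_floor_eq_intCast_floor hT, Int.self_sub_fract]
  have hsq := Int.three_mul_sum_Icc_neg_sq (R := ℝ) ⌊T⌋₊
  rw [tsum_ite_abs_lt_eq_sum_Icc hT, sum_sub_distrib, sum_const, nsmul_eq_mul, Int.card_Icc_neg]
  push_cast
  rw [hM] at hsq ⊢
  linear_combination (-1 / 3 : ℝ) * hsq
end
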